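/- arXiv:1205.0377 — 9 statements merged into one kernel-verified Lean document; each statement's English description precedes it below -/
import Mathlib

section
/- For every x in (0, π/2), we have tan x < x + (tan x)³/3. -/
/-!
With `t = tan y`, the function `y + t³/3 - t` has derivative `1 + t²(1 + t²) - (1 + t²) = t⁴`,
which is positive on `(0, π/2)`; the function vanishes at `0`, so it is positive on `(0, π/2)`.
-/

open Real Set

lemma Real.hasDerivAt_tan_eq_one_add_tan_sq {y : ℝ} (h : cos y ≠ 0) :
    HasDerivAt tan (1 + tan y ^ 2) y := by
  simpa only [one_div, ← inv_one_add_tan_sq h, inv_inv] using hasDerivAt_tan h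

lemma hasDerivAt_add_tan_pow_three_div_three_sub_tan {y : ℝ} (h : cos y ≠ 0) :
    HasDerivAt (fun y => y + tan y ^ 3 / 3 - tan y) (tan y ^ 4) y := by
  have ht := hasDerivAt_tan_eq_one_add_tan_sq h
  exact (((hasDerivAt_id' y).add ((ht.pow 3).div_const 3)).sub ht).congr_deriv (by ring)

lemma strictMonoOn_add_tan_pow_three_div_three_sub_tan :
    StrictMonoOn (fun y => y + tan y ^ 3 / 3 - tan y) (Ico 0 (π / 2)) := by
  have hcos : ∀ y ∈ Ico 0 (π / 2), cos y ≠ 0 := fun y hy =>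
    (cos_pos_of_mem_Ioo ⟨by linarith [hy.1, pi_pos], hy.2⟩).ne'
  refine strictMonoOn_of_deriv_pos (convex_Ico _ _) ?_ fun y hy => ?_
  · exact fun y hy =>
      (hasDerivAt_add_tan_pow_three_div_three_sub_tan (hcos y hy)).continuousAt.continuousWithinAt
  · rw [interior_Ico] at hy
    rw [(hasDerivAt_add_tan_pow_three_div_three_sub_tan (hcos y (Ioo_subset_Ico_self hy))).deriv]
    exact pow_pos (tan_pos_of_pos_of_lt_pi_div_two hy.1 hy.2) 4

theorem tan_upper (x : ℝ) (hx : 0 < x) (hx2 : x < Real.pi / 2) :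
    Real.tan x < x + (Real.tan x) ^ 3 / 3 := by
  have h := strictMonoOn_add_tan_pow_three_div_three_sub_tan
    ⟨le_rfl, by positivity⟩ ⟨hx.le, hx2⟩ hx
  simp only [tan_zero] at h
  linarith
end

section
/- For every x in (0, π/2), we have x² tan x < 3(tan x − x). -/
/-!
Since `cos x > 0`, the inequality is `f x > 0` for `f y = (3 - y²) sin y - 3 y cos y`.
Now `f 0 = 0` and `f' y = y (sin y - y cos y)`, where `g y = sin y - y cos y` has `g 0 = 0` and
`g' y = y sin y > 0` on `(0, π)`; so `g`, and then `f`, is positive on `(0, π]`.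
-/

open Real Set

theorem pos_of_hasDerivAt_pos {f f' : ℝ → ℝ} {a b : ℝ} (hf : ∀ y, HasDerivAt f (f' y) y)
    (hfa : f a = 0) (hf' : ∀ y ∈ Ioo a b, 0 < f' y) {x : ℝ} (hx : x ∈ Ioc a b) : 0 < f x := by
  have hmono : StrictMonoOn f (Icc a b) :=
    strictMonoOn_of_hasDerivWithinAt_pos (convex_Icc a b)
      (continuous_iff_continuousAt.2 fun y => (hf y).continuousAt).continuousOn
      (fun y _ => (hf y).hasDerivWithinAt)
      (by rwa [interior_Icc])
  simpa [hfa] using hmono (left_mem_Icc.2 (hx.1.le.trans hx.2)) (Ioc_subset_Icc_self hx) hx.1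

theorem hasDerivAt_sin_sub_mul_cos (y : ℝ) :
    HasDerivAt (fun y => sin y - y * cos y) (y * sin y) y :=
  ((hasDerivAt_sin y).sub ((hasDerivAt_id' y).mul (hasDerivAt_cos y))).congr_deriv (by ring)

theorem sin_sub_mul_cos_pos {y : ℝ} (hy : y ∈ Ioc 0 π) : 0 < sin y - y * cos y :=
  pos_of_hasDerivAt_pos hasDerivAt_sin_sub_mul_cos (by simp)
    (fun _ ht => mul_pos ht.1 (sin_pos_of_mem_Ioo ht)) hy

theorem hasDerivAt_three_sub_sq_mul_sin_sub_mul_cos (y : ℝ) :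
    HasDerivAt (fun y => (3 - y ^ 2) * sin y - 3 * y * cos y)
      (y * (sin y - y * cos y)) y :=
  ((((hasDerivAt_pow 2 y).const_sub 3).mul (hasDerivAt_sin y)).sub
    (((hasDerivAt_id' y).const_mul 3).mul (hasDerivAt_cos y))).congr_deriv (by norm_num; ring)

theorem three_sub_sq_mul_sin_sub_mul_cos_pos {y : ℝ} (hy : y ∈ Ioc 0 π) :
    0 < (3 - y ^ 2) * sin y - 3 * y * cos y :=
  pos_of_hasDerivAt_pos hasDerivAt_three_sub_sq_mul_sin_sub_mul_cos (by simp)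
    (fun _ ht => mul_pos ht.1 (sin_sub_mul_cos_pos (Ioo_subset_Ioc_self ht))) hy

theorem main_a (x : ℝ) (hx : 0 < x) (hx2 : x < Real.pi / 2) :
    x ^ 2 * Real.tan x < 3 * (Real.tan x - x) := by
  have hcos : 0 < cos x := cos_pos_of_mem_Ioo ⟨by linarith, hx2⟩
  have hf : 0 < (3 - x ^ 2) * sin x - 3 * x * cos x :=
    three_sub_sq_mul_sin_sub_mul_cos_pos ⟨hx, by linarith [pi_pos]⟩
  rw [tan_eq_sin_div_cos, ← sub_pos]
  calc (0 : ℝ) < ((3 - x ^ 2) * sin x - 3 * x * cos x) / cos x := div_pos hf hcos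
    _ = 3 * (sin x / cos x - x) - x ^ 2 * (sin x / cos x) := by field_simp; ring
end

section
/- For every x in (0, π/2), we have 3(tan x − x) < x^(9/5) · (tan x)^(6/5). -/
/-!
Raising both sides to the fifth power and multiplying by `cos x ^ 6`, the claim becomes
`243 (sin x - x cos x) ^ 5 cos x < x ^ 9 sin x ^ 6`. On `[0, ∞)` the Maclaurin partial sums of
`sin` and `cos` alternately over- and underestimate them, so replacing `sin` and `cos` by suitable
partial sums reduces this to `x ^ 15` times a polynomial inequality in `y = x ^ 2`, which holds on
`0 < y < 617 / 250`, an interval containing `(0, π ^ 2 / 4)`.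
-/

open Real Finset Nat

noncomputable def sinTaylor (n : ℕ) (t : ℝ) : ℝ :=
  ∑ k ∈ range n, (-1) ^ k * (t ^ (2 * k + 1) / (2 * k + 1)!)

noncomputable def cosTaylor (n : ℕ) (t : ℝ) : ℝ :=
  ∑ k ∈ range n, (-1) ^ k * (t ^ (2 * k) / (2 * k)!)

theorem hasDerivAt_pow_succ_div_factorial (m : ℕ) (t : ℝ) :
    HasDerivAt (fun t : ℝ ↦ t ^ (m + 1) / (m + 1)!) (t ^ m / m !) t := by
  refine ((hasDerivAt_pow (m + 1) t).div_const ((m + 1)! : ℝ)).congr_deriv ?_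
  rw [factorial_succ, Nat.cast_mul]
  field_simp
  push_cast
  ring

theorem hasDerivAt_sinTaylor (n : ℕ) (t : ℝ) :
    HasDerivAt (sinTaylor n) (cosTaylor n t) t := by
  unfold sinTaylor cosTaylor
  exact HasDerivAt.fun_sum fun k _ ↦
    (hasDerivAt_pow_succ_div_factorial (2 * k) t).const_mul ((-1 : ℝ) ^ k)

theorem hasDerivAt_cosTaylor (n : ℕ) (t : ℝ) :
    HasDerivAt (cosTaylor (n + 1)) (-sinTaylor n t) t := by
  have hsplit : cosTaylor (n + 1) = fun t ↦
      ∑ k ∈ range n, (-1 : ℝ) ^ (k + 1) * (t ^ (2 * k + 1 + 1) / (2 * k + 1 + 1)!) + 1 := by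
    ext t
    simp [cosTaylor, sum_range_succ', mul_add]
  rw [hsplit, sinTaylor, ← sum_neg_distrib]
  refine ((HasDerivAt.fun_sum fun k _ ↦ (hasDerivAt_pow_succ_div_factorial (2 * k + 1) t).const_mul
    ((-1 : ℝ) ^ (k + 1))).add_const 1).congr_deriv (sum_congr rfl fun k _ ↦ by ring)

theorem nonneg_of_hasDerivAt_nonneg {f f' : ℝ → ℝ} (hf : ∀ t, HasDerivAt f (f' t) t)
    (h0 : f 0 = 0) (hf' : ∀ t, 0 ≤ t → 0 ≤ f' t) {x : ℝ} (hx : 0 ≤ x) : 0 ≤ f x := by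
  have hmono : MonotoneOn f (Set.Ici 0) :=
    monotoneOn_of_hasDerivWithinAt_nonneg (convex_Ici 0)
      (fun t _ ↦ (hf t).continuousAt.continuousWithinAt)
      (fun t _ ↦ (hf t).hasDerivWithinAt)
      (fun t ht ↦ hf' t (interior_subset ht))
  simpa [h0] using hmono Set.self_mem_Ici hx hx

theorem neg_one_pow_mul_sin_sub_sinTaylor_nonneg_of_cos {n : ℕ}
    (h : ∀ t, 0 ≤ t → 0 ≤ (-1) ^ n * (cos t - cosTaylor n t)) {t : ℝ} (ht : 0 ≤ t) :
    0 ≤ (-1) ^ n * (sin t - sinTaylor n t) :=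
  nonneg_of_hasDerivAt_nonneg
    (fun s ↦ ((hasDerivAt_sin s).sub (hasDerivAt_sinTaylor n s)).const_mul _)
    (by simp [sinTaylor]) h ht

theorem neg_one_pow_mul_cos_sub_cosTaylor_nonneg_of_sin {n : ℕ}
    (h : ∀ t, 0 ≤ t → 0 ≤ (-1) ^ n * (sin t - sinTaylor n t)) {t : ℝ} (ht : 0 ≤ t) :
    0 ≤ (-1) ^ (n + 1) * (cos t - cosTaylor (n + 1) t) :=
  nonneg_of_hasDerivAt_nonneg
    (fun s ↦ (((hasDerivAt_cos s).sub (hasDerivAt_cosTaylor n s)).const_mul _).congr_deriv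
      (by ring))
    (by simp [cosTaylor, sum_range_succ']) h ht

theorem neg_one_pow_mul_cos_sub_cosTaylor_nonneg (n : ℕ) {t : ℝ} (ht : 0 ≤ t) :
    0 ≤ (-1) ^ (n + 1) * (cos t - cosTaylor (n + 1) t) := by
  induction n generalizing t with
  | zero => simpa [cosTaylor] using cos_le_one t
  | succ n ih =>
    exact neg_one_pow_mul_cos_sub_cosTaylor_nonneg_of_sin
      (fun s hs ↦ neg_one_pow_mul_sin_sub_sinTaylor_nonneg_of_cos (fun r hr ↦ ih hr) hs) ht

theorem neg_one_pow_mul_sin_sub_sinTaylor_nonneg (n : ℕ) {t : ℝ} (ht : 0 ≤ t) :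
    0 ≤ (-1) ^ (n + 1) * (sin t - sinTaylor (n + 1) t) :=
  neg_one_pow_mul_sin_sub_sinTaylor_nonneg_of_cos
    (fun _ hs ↦ neg_one_pow_mul_cos_sub_cosTaylor_nonneg n hs) ht

theorem sin_bounds {x : ℝ} (hx : 0 ≤ x) :
    x * (1 - x ^ 2 / 6 + x ^ 4 / 120 - x ^ 6 / 5040) ≤ sin x ∧
      sin x ≤ x - x ^ 3 / 6 + x ^ 5 / 120 - x ^ 7 / 5040 + x ^ 9 / 362880 := by
  have lower := neg_one_pow_mul_sin_sub_sinTaylor_nonneg 3 hx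
  have upper := neg_one_pow_mul_sin_sub_sinTaylor_nonneg 4 hx
  norm_num [sinTaylor, sum_range_succ, factorial] at lower upper
  constructor <;> linarith

theorem cos_bounds {x : ℝ} (hx : 0 ≤ x) :
    1 - x ^ 2 / 2 + x ^ 4 / 24 - x ^ 6 / 720 ≤ cos x ∧ cos x ≤ 1 - x ^ 2 / 2 + x ^ 4 / 24 := by
  have lower := neg_one_pow_mul_cos_sub_cosTaylor_nonneg 3 hx
  have upper := neg_one_pow_mul_cos_sub_cosTaylor_nonneg 2 hx
  norm_num [cosTaylor, sum_range_succ, factorial] at lower upper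
  constructor <;> linarith

theorem taylor_majorant_lt_minorant {y : ℝ} (hy : 0 < y) (hy' : y < 617 / 250) :
    243 * (1 / 3 - y / 30 + y ^ 2 / 840 + y ^ 3 / 362880) ^ 5 * (1 - y / 2 + y ^ 2 / 24)
      < (1 - y / 6 + y ^ 2 / 120 - y ^ 3 / 5040) ^ 6 := by
  have hB : 0 < 617 / 250 - y := by linarith
  -- The difference is `y ^ 2` times a polynomial of degree 16 with positive coefficients in the
  -- Bernstein basis `y ^ i * (617 / 250 - y) ^ (16 - i)`.
  linarith [mul_pos (pow_pos hy 2) (pow_pos hB 16), mul_pos (pow_pos hy 3) (pow_pos hB 15),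
    mul_pos (pow_pos hy 4) (pow_pos hB 14), mul_pos (pow_pos hy 5) (pow_pos hB 13),
    mul_pos (pow_pos hy 6) (pow_pos hB 12), mul_pos (pow_pos hy 7) (pow_pos hB 11),
    mul_pos (pow_pos hy 8) (pow_pos hB 10), mul_pos (pow_pos hy 9) (pow_pos hB 9),
    mul_pos (pow_pos hy 10) (pow_pos hB 8), mul_pos (pow_pos hy 11) (pow_pos hB 7),
    mul_pos (pow_pos hy 12) (pow_pos hB 6), mul_pos (pow_pos hy 13) (pow_pos hB 5),
    mul_pos (pow_pos hy 14) (pow_pos hB 4), mul_pos (pow_pos hy 15) (pow_pos hB 3),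
    mul_pos (pow_pos hy 16) (pow_pos hB 2), mul_pos (pow_pos hy 17) (pow_pos hB 1),
    mul_pos (pow_pos hy 18) (pow_pos hB 0)]

theorem sin_sub_mul_cos_pow_five_mul_cos_lt {x : ℝ} (hx : 0 < x) (hx' : x < π / 2) :
    243 * (sin x - x * cos x) ^ 5 * cos x < x ^ 9 * sin x ^ 6 := by
  have hy : x ^ 2 < 617 / 250 := by nlinarith [pi_lt_d6] -- `π ^ 2 / 4 < 2.4674 < 617 / 250`
  have hcos : 0 < cos x := cos_pos_of_mem_Ioo ⟨by linarith [pi_pos], hx'⟩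
  have hgap : 0 < sin x - x * cos x := by
    have := lt_tan hx hx'
    rwa [tan_eq_sin_div_cos, lt_div_iff₀ hcos, ← sub_pos] at this
  obtain ⟨hsin_lower, hsin_upper⟩ := sin_bounds hx.le
  obtain ⟨hcos_lower, hcos_upper⟩ := cos_bounds hx.le
  have hgap_upper : sin x - x * cos x
      ≤ x ^ 3 * (1 / 3 - x ^ 2 / 30 + x ^ 4 / 840 + x ^ 6 / 362880) := by
    nlinarith [mul_le_mul_of_nonneg_left hcos_lower hx.le]
  have hminorant : 0 ≤ x * (1 - x ^ 2 / 6 + x ^ 4 / 120 - x ^ 6 / 5040) := by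
    have : 0 ≤ 1 - x ^ 2 / 6 + x ^ 4 / 120 - x ^ 6 / 5040 := by nlinarith
    positivity
  calc 243 * (sin x - x * cos x) ^ 5 * cos x
      ≤ 243 * (x ^ 3 * (1 / 3 - x ^ 2 / 30 + x ^ 4 / 840 + x ^ 6 / 362880)) ^ 5
          * (1 - x ^ 2 / 2 + x ^ 4 / 24) := by
        gcongr
        exact mul_nonneg (by norm_num) (pow_nonneg (hgap.le.trans hgap_upper) 5)
    _ = x ^ 15 * (243 * (1 / 3 - x ^ 2 / 30 + (x ^ 2) ^ 2 / 840 + (x ^ 2) ^ 3 / 362880) ^ 5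
          * (1 - x ^ 2 / 2 + (x ^ 2) ^ 2 / 24)) := by ring
    _ < x ^ 15 * (1 - x ^ 2 / 6 + (x ^ 2) ^ 2 / 120 - (x ^ 2) ^ 3 / 5040) ^ 6 := by
        gcongr
        exact taylor_majorant_lt_minorant (by positivity) hy
    _ = x ^ 9 * (x * (1 - x ^ 2 / 6 + x ^ 4 / 120 - x ^ 6 / 5040)) ^ 6 := by ring
    _ ≤ x ^ 9 * sin x ^ 6 := by gcongr

theorem tan_sub_pow_five_lt {x : ℝ} (hx : 0 < x) (hx' : x < π / 2) :
    243 * (tan x - x) ^ 5 < x ^ 9 * tan x ^ 6 := by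
  have hcos : 0 < cos x := cos_pos_of_mem_Ioo ⟨by linarith [pi_pos], hx'⟩
  have hdiff : x ^ 9 * tan x ^ 6 - 243 * (tan x - x) ^ 5
      = (x ^ 9 * sin x ^ 6 - 243 * (sin x - x * cos x) ^ 5 * cos x) / cos x ^ 6 := by
    rw [tan_eq_sin_div_cos]
    field_simp
  have := div_pos (sub_pos.2 (sin_sub_mul_cos_pow_five_mul_cos_lt hx hx')) (pow_pos hcos 6)
  linarith

theorem main_b (x : ℝ) (hx : 0 < x) (hx2 : x < Real.pi / 2) :
    3 * (Real.tan x - x) < x ^ ((9 : ℝ) / 5) * Real.tan x ^ ((6 : ℝ) / 5) := by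
  have htan : 0 < tan x := tan_pos_of_pos_of_lt_pi_div_two hx hx2
  have h9 : (x ^ ((9 : ℝ) / 5)) ^ 5 = x ^ 9 := by rw [← rpow_mul_natCast hx.le]; norm_num
  have h6 : (tan x ^ ((6 : ℝ) / 5)) ^ 5 = tan x ^ 6 := by
    rw [← rpow_mul_natCast htan.le]; norm_num
  refine lt_of_pow_lt_pow_left₀ 5 (by positivity) ?_
  rw [mul_pow, mul_pow, h9, h6]
  linarith [tan_sub_pow_five_lt hx hx2]
end

section
/- For every x in (0, π/2), x + (1/3) x² tan x < tan x. -/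
open Real Set

lemma Real.mul_cos_lt_sin {x : ℝ} (hx : 0 < x) (hx2 : x < π / 2) : x * cos x < sin x := by
  have hcos : 0 < cos x := cos_pos_of_mem_Ioo ⟨by linarith [pi_pos], hx2⟩
  simpa [tan_eq_sin_div_cos, lt_div_iff₀ hcos] using lt_tan hx hx2

/-- `3 sin y - y² sin y - 3 y cos y` vanishes at `0` and has derivative `y (sin y - y cos y) > 0`. -/
lemma Real.three_mul_mul_cos_add_sq_mul_sin_lt {x : ℝ} (hx : 0 < x) (hx2 : x < π / 2) :
    3 * x * cos x + x ^ 2 * sin x < 3 * sin x := by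
  let h : ℝ → ℝ := fun y => 3 * sin y - y ^ 2 * sin y - 3 * y * cos y
  have hderiv (y : ℝ) : HasDerivAt h (y * (sin y - y * cos y)) y := by
    have := (((hasDerivAt_sin y).const_mul 3).sub ((hasDerivAt_pow 2 y).mul (hasDerivAt_sin y))).sub
      (((hasDerivAt_id y).const_mul 3).mul (hasDerivAt_cos y))
    exact this.congr_deriv (by simp only [id, Nat.cast_ofNat]; ring)
  have hmono : StrictMonoOn h (Icc 0 (π / 2)) := by
    refine strictMonoOn_of_deriv_pos (convex_Icc _ _)
      (fun y _ => (hderiv y).continuousAt.continuousWithinAt) fun y hy => ?_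
    rw [interior_Icc] at hy
    rw [(hderiv y).deriv]
    exact mul_pos hy.1 (sub_pos.2 (mul_cos_lt_sin hy.1 hy.2))
  have h0x : h 0 < h x := hmono ⟨le_rfl, by positivity⟩ ⟨hx.le, hx2.le⟩ hx
  simp only [h, sin_zero, mul_zero, sub_zero] at h0x
  linarith

theorem main_a' (x : ℝ) (hx : 0 < x) (hx2 : x < Real.pi / 2) :
    x + (1 / 3) * x ^ 2 * Real.tan x < Real.tan x := by
  have hcos : 0 < cos x := cos_pos_of_mem_Ioo ⟨by linarith [pi_pos], hx2⟩
  have key := three_mul_mul_cos_add_sq_mul_sin_lt hx hx2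
  rw [tan_eq_sin_div_cos]
  calc x + 1 / 3 * x ^ 2 * (sin x / cos x)
      = (3 * x * cos x + x ^ 2 * sin x) / (3 * cos x) := by field_simp
    _ < 3 * sin x / (3 * cos x) := by gcongr
    _ = sin x / cos x := by field_simp
end

section
/- For all n ≥ 4, (2n+2)(2n+1)·Tₙ − 3·Tₙ₊₁ > 0, where Tₙ = 2(4n−1)² + 1 + (8n−27)·9^(n−1). -/
/-!
With `x = 9 ^ (n - 1)` and `9 ^ n = 9 x`, the expression is `P n + Q n * x` for the polynomials
`P n = (2n+2)(2n+1)(2(4n-1)² + 1) - 3(2(4n+3)² + 1)` and `Q n = (2n+2)(2n+1)(8n-27) - 27(8n-19)`.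
Both are positive for `n ≥ 4` (`Q 4 = 99`, while `Q 3 < 0`), and `x > 0`.
-/

lemma polynomial_part_pos (n : ℚ) (hn : 2 ≤ n) :
    0 < (2 * n + 2) * (2 * n + 1) * (2 * (4 * n - 1) ^ 2 + 1) - 3 * (2 * (4 * (n + 1) - 1) ^ 2 + 1) := by
  nlinarith [mul_le_mul hn hn (by norm_num) (by linarith)]

lemma exponential_coeff_pos (n : ℚ) (hn : 4 ≤ n) :
    0 < (2 * n + 2) * (2 * n + 1) * (8 * n - 27) - 27 * (8 * (n + 1) - 27) := by
  nlinarith [mul_le_mul hn hn (by norm_num) (by linarith)]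

theorem U_pos (n : ℕ) (hn : 4 ≤ n) :
    0 < (2 * (n : ℚ) + 2) * (2 * (n : ℚ) + 1) *
        (2 * (4 * (n : ℚ) - 1) ^ 2 + 1 + (8 * (n : ℚ) - 27) * (9 : ℚ) ^ ((n : ℤ) - 1)) -
      3 * (2 * (4 * ((n : ℚ) + 1) - 1) ^ 2 + 1 + (8 * ((n : ℚ) + 1) - 27) * (9 : ℚ) ^ (n : ℤ)) := by
  have hn' : (4 : ℚ) ≤ n := by exact_mod_cast hn
  have hpow : (9 : ℚ) ^ (n : ℤ) = 9 * 9 ^ ((n : ℤ) - 1) := by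
    rw [zpow_sub_one₀ (by norm_num), mul_comm, inv_mul_cancel_right₀ (by norm_num)]
  rw [hpow]
  have hsplit := add_pos (polynomial_part_pos n (by linarith))
    (mul_pos (exponential_coeff_pos n hn') (by positivity : (0 : ℚ) < 9 ^ ((n : ℤ) - 1)))
  linear_combination hsplit
end

section
/- The function g(x) = 3 − x² − 3x·cot x is strictly monotonically increasing on (0, π/2). -/
/-! With `t = 2x`, the derivative of `g` is `(t (2 + cos t) - 3 sin t) / (2 sin² x)`, so it
suffices that `h(t) = t (2 + cos t) - 3 sin t` is positive on `(0, π)`. Now `h(0) = 0` with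
`h' = 2 - 2 cos t - t sin t`, `h'(0) = 0` with `h'' = sin t - t cos t`, and `h''(0) = 0` with
`h''' = t sin t > 0`; positivity climbs back up the chain. -/

open Real Set

lemma pos_of_eq_zero_of_hasDerivAt_pos {f f' : ℝ → ℝ} {a b x : ℝ}
    (hcont : ContinuousOn f (Icc a b)) (hf : ∀ y ∈ Ioo a b, HasDerivAt f (f' y) y)
    (hf' : ∀ y ∈ Ioo a b, 0 < f' y) (ha : f a = 0) (hx : x ∈ Ioc a b) : 0 < f x := by
  have hmono : StrictMonoOn f (Icc a b) :=
    strictMonoOn_of_hasDerivWithinAt_pos (convex_Icc a b) hcont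
      (fun y hy => by rw [interior_Icc] at hy ⊢; exact (hf y hy).hasDerivWithinAt)
      (fun y hy => by rw [interior_Icc] at hy; exact hf' y hy)
  simpa [ha] using hmono (left_mem_Icc.2 (hx.1.le.trans hx.2)) (Ioc_subset_Icc_self hx) hx.1

namespace Real

lemma sin_sub_mul_cos_pos {t : ℝ} (ht : t ∈ Ioo 0 π) : 0 < sin t - t * cos t :=
  pos_of_eq_zero_of_hasDerivAt_pos (f := fun t => sin t - t * cos t) (by fun_prop)
    (fun y _ => ((hasDerivAt_sin y).sub ((hasDerivAt_id' y).mul (hasDerivAt_cos y))).congr_deriv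
      (by ring : _ = y * sin y))
    (fun y hy => mul_pos hy.1 (sin_pos_of_pos_of_lt_pi hy.1 hy.2)) (by simp) ⟨ht.1, ht.2.le⟩

lemma two_sub_two_mul_cos_sub_mul_sin_pos {t : ℝ} (ht : t ∈ Ioo 0 π) :
    0 < 2 - 2 * cos t - t * sin t :=
  pos_of_eq_zero_of_hasDerivAt_pos (f := fun t => 2 - 2 * cos t - t * sin t) (by fun_prop)
    (fun y _ => ((((hasDerivAt_cos y).const_mul 2).const_sub 2).sub
      ((hasDerivAt_id' y).mul (hasDerivAt_sin y))).congr_deriv (by ring : _ = sin y - y * cos y))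
    (fun _ hy => sin_sub_mul_cos_pos hy) (by simp) ⟨ht.1, ht.2.le⟩

lemma three_mul_sin_lt_mul_two_add_cos {t : ℝ} (ht : t ∈ Ioo 0 π) :
    3 * sin t < t * (2 + cos t) :=
  sub_pos.1 <| pos_of_eq_zero_of_hasDerivAt_pos (f := fun t => t * (2 + cos t) - 3 * sin t)
    (by fun_prop)
    (fun y _ => (((hasDerivAt_id' y).mul ((hasDerivAt_cos y).const_add 2)).sub
      ((hasDerivAt_sin y).const_mul 3)).congr_deriv (by ring : _ = 2 - 2 * cos y - y * sin y))
    (fun _ hy => two_sub_two_mul_cos_sub_mul_sin_pos hy) (by simp) ⟨ht.1, ht.2.le⟩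

lemma hasDerivAt_three_sub_sq_sub_mul_cot {x : ℝ} (hx : sin x ≠ 0) :
    HasDerivAt (fun x => 3 - x ^ 2 - 3 * x * (cos x / sin x))
      ((2 * x * (2 + cos (2 * x)) - 3 * sin (2 * x)) / (2 * sin x ^ 2)) x := by
  refine (((hasDerivAt_pow 2 x).const_sub 3).sub (((hasDerivAt_id' x).const_mul 3).mul
    ((hasDerivAt_cos x).fun_div (hasDerivAt_sin x) hx))).congr_deriv ?_
  rw [cos_two_mul, sin_two_mul]
  field_simp
  linear_combination x * sin_sq_add_cos_sq x

end Real

theorem g_strictMono :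
    StrictMonoOn (fun x : ℝ => 3 - x ^ 2 - 3 * x * (Real.cos x / Real.sin x))
      (Set.Ioo 0 (Real.pi / 2)) := by
  have hsin : ∀ x ∈ Ioo 0 (π / 2), 0 < sin x := fun x hx =>
    sin_pos_of_pos_of_lt_pi hx.1 (by linarith [hx.2, pi_pos])
  have hderiv := fun x hx => hasDerivAt_three_sub_sq_sub_mul_cot (hsin x hx).ne'
  refine strictMonoOn_of_hasDerivWithinAt_pos (convex_Ioo _ _)
    (continuousOn_of_forall_continuousAt fun x hx => (hderiv x hx).continuousAt)
    (fun x hx => by rw [interior_Ioo] at hx ⊢; exact (hderiv x hx).hasDerivWithinAt)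
    (fun x hx => ?_)
  rw [interior_Ioo] at hx
  have hnum := three_mul_sin_lt_mul_two_add_cos (t := 2 * x)
    ⟨by linarith [hx.1], by linarith [hx.2]⟩
  have hsinx := hsin x hx
  exact div_pos (by linarith) (by positivity)
end

section
/- The function h(x) = x − 3 tan x/(3 + tan²x) is positive on (0, π/2). -/
/-! Substituting `t = tan x`, the claim becomes `3 t / (3 + t²) < arctan t` for `t > 0`.
The difference `arctan t - 3 t / (3 + t²)` vanishes at `0` and has derivative
`4 t⁴ / ((1 + t²) (3 + t²)²)`, positive for `t > 0`. -/

open Real Set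

lemma hasDerivAt_arctan_sub_three_mul_div (s : ℝ) :
    HasDerivAt (fun t => arctan t - 3 * t / (3 + t ^ 2))
      (4 * s ^ 4 / ((1 + s ^ 2) * (3 + s ^ 2) ^ 2)) s := by
  have hden : 3 + s ^ 2 ≠ 0 := by positivity
  have hquot : HasDerivAt (fun t => 3 * t / (3 + t ^ 2))
      ((3 * (3 + s ^ 2) - 3 * s * (2 * s)) / (3 + s ^ 2) ^ 2) s := by
    refine HasDerivAt.div ?_ ?_ hden
    · simpa using (hasDerivAt_id s).const_mul 3
    · simpa using (hasDerivAt_pow 2 s).const_add 3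
  refine ((hasDerivAt_arctan s).sub hquot).congr_deriv ?_
  have h1 : 1 + s ^ 2 ≠ 0 := by positivity
  field_simp
  ring

lemma strictMonoOn_arctan_sub_three_mul_div :
    StrictMonoOn (fun t => arctan t - 3 * t / (3 + t ^ 2)) (Ici 0) := by
  refine strictMonoOn_of_hasDerivWithinAt_pos (convex_Ici 0)
    (fun s _ => (hasDerivAt_arctan_sub_three_mul_div s).continuousAt.continuousWithinAt)
    (fun s _ => (hasDerivAt_arctan_sub_three_mul_div s).hasDerivWithinAt) ?_
  intro s hs
  rw [interior_Ici, mem_Ioi] at hs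
  positivity

lemma three_mul_div_three_add_sq_lt_arctan {t : ℝ} (ht : 0 < t) :
    3 * t / (3 + t ^ 2) < arctan t := by
  simpa [sub_pos] using strictMonoOn_arctan_sub_three_mul_div self_mem_Ici ht.le ht

theorem h_pos (x : ℝ) (hx : 0 < x) (hx2 : x < Real.pi / 2) :
    0 < x - 3 * Real.tan x / (3 + Real.tan x ^ 2) := by
  have harctan : arctan (tan x) = x := arctan_tan (by linarith [pi_pos]) hx2
  have hlt := three_mul_div_three_add_sq_lt_arctan (tan_pos_of_pos_of_lt_pi_div_two hx hx2)
  rw [harctan] at hlt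
  linarith
end

section
/- The limit as x approaches π/2 from the left of log(3(tan x − x)/x³)/log(tan x / x) equals 1. -/
/-!
Write `a x = 3 (tan x - x) / x³` and `b x = tan x / x`. As `x → π/2⁻`, `b x → ∞` while
`a x / b x = (3 / x²) (1 - x / tan x) → 12 / π² > 0`, so `log (a x) = log (b x) + O(1)` and the
ratio of the logarithms tends to `1`.
-/

open Real Filter Set Topology

theorem Filter.Tendsto.div_nhds_one_of_sub {α : Type*} {l : Filter α} {f g : α → ℝ} {c : ℝ}
    (hg : Tendsto g l atTop) (hfg : Tendsto (fun x => f x - g x) l (𝓝 c)) :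
    Tendsto (fun x => f x / g x) l (𝓝 1) := by
  have hquot : Tendsto (fun x => (f x - g x) / g x + 1) l (𝓝 (0 + 1)) :=
    (hfg.div_atTop hg).add_const 1
  rw [zero_add] at hquot
  refine hquot.congr' ?_
  filter_upwards [hg.eventually_gt_atTop 0] with x hx
  field_simp
  ring

theorem tendsto_log_div_log_of_tendsto_div {α : Type*} {l : Filter α} {a b : α → ℝ} {c : ℝ}
    (hc : 0 < c) (hb : Tendsto b l atTop) (hab : Tendsto (fun x => a x / b x) l (𝓝 c)) :
    Tendsto (fun x => log (a x) / log (b x)) l (𝓝 1) := by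
  refine (tendsto_log_atTop.comp hb).div_nhds_one_of_sub (c := log c) ?_
  refine ((continuousAt_log hc.ne').tendsto.comp hab).congr' ?_
  filter_upwards [hab.eventually_ne hc.ne'] with x hx
  rw [div_ne_zero_iff] at hx
  exact log_div hx.1 hx.2

theorem tendsto_tan_div_self_nhdsLT_pi_div_two :
    Tendsto (fun x => tan x / x) (𝓝[<] (π / 2)) atTop := by
  have hinv : Tendsto (fun x : ℝ => x⁻¹) (𝓝[<] (π / 2)) (𝓝 (π / 2)⁻¹) :=
    (tendsto_id.mono_left nhdsWithin_le_nhds).inv₀ (by positivity)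
  simpa only [div_eq_mul_inv] using tendsto_tan_pi_div_two.atTop_mul_pos (by positivity) hinv

theorem tendsto_three_mul_tan_sub_self_div_pow_three_div_tan_div_self :
    Tendsto (fun x => (3 * (tan x - x) / x ^ 3) / (tan x / x)) (𝓝[<] (π / 2))
      (𝓝 (3 / (π / 2) ^ 2)) := by
  have hx : Tendsto (fun x : ℝ => x) (𝓝[<] (π / 2)) (𝓝 (π / 2)) :=
    tendsto_id.mono_left nhdsWithin_le_nhds
  have hlim : Tendsto (fun x => 3 / x ^ 2 * (1 - x * (tan x)⁻¹)) (𝓝[<] (π / 2))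
      (𝓝 (3 / (π / 2) ^ 2 * (1 - π / 2 * 0))) :=
    (tendsto_const_nhds.div (hx.pow 2) (by positivity)).mul
      (tendsto_const_nhds.sub (hx.mul tendsto_tan_pi_div_two.inv_tendsto_atTop))
  rw [mul_zero, sub_zero, mul_one] at hlim
  refine hlim.congr' ?_
  have hx0 : ∀ᶠ x in 𝓝[<] (π / 2), x ≠ 0 := hx.eventually_ne (by positivity)
  filter_upwards [hx0, tendsto_tan_pi_div_two.eventually_ne_atTop 0] with x hx0 htan
  field_simp

theorem phi_limit_pi_half :
    Filter.Tendsto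
      (fun x : ℝ => Real.log (3 * (Real.tan x - x) / x ^ 3) / Real.log (Real.tan x / x))
      (nhdsWithin (Real.pi / 2) (Set.Iio (Real.pi / 2))) (nhds 1) :=
  tendsto_log_div_log_of_tendsto_div (by positivity) tendsto_tan_div_self_nhdsLT_pi_div_two
    tendsto_three_mul_tan_sub_self_div_pow_three_div_tan_div_self
end

section
/- The function g(x) = 6 log(tan x / x) − 5 log(3(tan x − x)/x³) is positive on (0, π/2). -/
/-!
Since `tan' = 1 + tan ^ 2`, the numerator of `g'` is a polynomial in `x` and `t = tan x`,
cubic in `t` (`gDerivNumerator`), over the positive denominator `x t (t - x)`. Feeding lower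
bounds for `tan` back into `tan' = 1 + tan ^ 2` gives `tan x ≥ T x`, where `T` is the Taylor
polynomial of `tan` of degree 9. The cubic is positive at `t = T x`, and so are its first two
`t`-derivatives there, so it is positive for every `t ≥ T x`. Hence `g` is strictly increasing on
`(0, π/2)`, and `g x → 0` as `x → 0` because `tan x / x → 1` and `(tan x - x) / x³ → 1/3`.
-/

open Real Set Filter Topology

theorem hasDerivAt_tan_one_add_sq {x : ℝ} (h : cos x ≠ 0) :
    HasDerivAt tan (1 + tan x ^ 2) x := by
  convert hasDerivAt_tan h using 1
  rw [one_div, ← inv_one_add_tan_sq h, inv_inv]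

theorem cos_pos_of_mem_Ico_zero {x : ℝ} (hx : x ∈ Ico 0 (π / 2)) : 0 < cos x :=
  cos_pos_of_mem_Ioo ⟨by linarith [pi_pos, hx.1], hx.2⟩

theorem le_tan_of_hasDerivAt_le_one_add_sq {p p' q : ℝ → ℝ}
    (hp : ∀ y ∈ Ico 0 (π / 2), HasDerivAt p (p' y) y) (hp0 : p 0 ≤ 0)
    (hq : ∀ y ∈ Ioo 0 (π / 2), 0 ≤ q y ∧ q y ≤ tan y)
    (hp' : ∀ y ∈ Ioo 0 (π / 2), p' y ≤ 1 + q y ^ 2) :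
    ∀ x ∈ Ico 0 (π / 2), p x ≤ tan x := by
  have hderiv : ∀ y ∈ Ico 0 (π / 2),
      HasDerivAt (fun z => tan z - p z) (1 + tan y ^ 2 - p' y) y :=
    fun y hy => (hasDerivAt_tan_one_add_sq (cos_pos_of_mem_Ico_zero hy).ne').sub (hp y hy)
  have hmono : MonotoneOn (fun z => tan z - p z) (Ico 0 (π / 2)) := by
    refine monotoneOn_of_hasDerivWithinAt_nonneg (convex_Ico _ _)
      (fun y hy => (hderiv y hy).continuousAt.continuousWithinAt)
      (fun y hy => (hderiv y (interior_subset hy)).hasDerivWithinAt) fun y hy => ?_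
    rw [interior_Ico] at hy
    obtain ⟨hq0, hqt⟩ := hq y hy
    nlinarith [hp' y hy]
  intro x hx
  have := hmono (left_mem_Ico.2 (by positivity)) hx hx.1
  simp only [tan_zero] at this
  linarith

/-- Degree 9 is needed: for the degree-7 truncation `p`, `gDerivNumerator x (p x) < 0` at
`x = 1`. -/
noncomputable def tanTaylor (x : ℝ) : ℝ :=
  x + x ^ 3 / 3 + 2 * x ^ 5 / 15 + 17 * x ^ 7 / 315 + 62 * x ^ 9 / 2835

theorem tanTaylor_le_tan : ∀ x ∈ Ico 0 (π / 2), tanTaylor x ≤ tan x := by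
  have h1 : ∀ y ∈ Ico 0 (π / 2), y ≤ tan y := fun y hy => le_tan hy.1 hy.2
  have h3 : ∀ y ∈ Ico 0 (π / 2), y + y ^ 3 / 3 ≤ tan y :=
    le_tan_of_hasDerivAt_le_one_add_sq (p' := fun y => 1 + y ^ 2) (q := id)
      (fun y _ => ((hasDerivAt_id' y).add ((hasDerivAt_pow 3 y).div_const 3)).congr_deriv
        (by push_cast; ring))
      (by norm_num) (fun y hy => ⟨hy.1.le, h1 y (Ioo_subset_Ico_self hy)⟩) (fun _ _ => le_rfl)
  have h5 : ∀ y ∈ Ico 0 (π / 2), y + y ^ 3 / 3 + 2 * y ^ 5 / 15 ≤ tan y :=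
    le_tan_of_hasDerivAt_le_one_add_sq (p' := fun y => 1 + y ^ 2 + 2 / 3 * y ^ 4)
      (q := fun y => y + y ^ 3 / 3)
      (fun y _ =>
        (((hasDerivAt_id' y).add ((hasDerivAt_pow 3 y).div_const 3)).add
          (((hasDerivAt_pow 5 y).const_mul 2).div_const 15)).congr_deriv (by push_cast; ring))
      (by norm_num) (fun y hy => ⟨by have := hy.1; positivity, h3 y (Ioo_subset_Ico_self hy)⟩)
      (fun y _ => by nlinarith [pow_nonneg (sq_nonneg y) 3])
  have h7 : ∀ y ∈ Ico 0 (π / 2), y + y ^ 3 / 3 + 2 * y ^ 5 / 15 + 17 * y ^ 7 / 315 ≤ tan y :=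
    le_tan_of_hasDerivAt_le_one_add_sq
      (p' := fun y => 1 + y ^ 2 + 2 / 3 * y ^ 4 + 17 / 45 * y ^ 6)
      (q := fun y => y + y ^ 3 / 3 + 2 * y ^ 5 / 15)
      (fun y _ =>
        ((((hasDerivAt_id' y).add ((hasDerivAt_pow 3 y).div_const 3)).add
          (((hasDerivAt_pow 5 y).const_mul 2).div_const 15)).add
          (((hasDerivAt_pow 7 y).const_mul 17).div_const 315)).congr_deriv (by push_cast; ring))
      (by norm_num) (fun y hy => ⟨by have := hy.1; positivity, h5 y (Ioo_subset_Ico_self hy)⟩)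
      (fun y _ => by nlinarith [pow_nonneg (sq_nonneg y) 4, pow_nonneg (sq_nonneg y) 5])
  exact le_tan_of_hasDerivAt_le_one_add_sq
    (p' := fun y => 1 + y ^ 2 + 2 / 3 * y ^ 4 + 17 / 45 * y ^ 6 + 62 / 315 * y ^ 8)
    (q := fun y => y + y ^ 3 / 3 + 2 * y ^ 5 / 15 + 17 * y ^ 7 / 315)
    (fun y _ =>
      (((((hasDerivAt_id' y).add ((hasDerivAt_pow 3 y).div_const 3)).add
        (((hasDerivAt_pow 5 y).const_mul 2).div_const 15)).add
        (((hasDerivAt_pow 7 y).const_mul 17).div_const 315)).add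
        (((hasDerivAt_pow 9 y).const_mul 62).div_const 2835)).congr_deriv (by push_cast; ring))
    (by norm_num [tanTaylor])
    (fun y hy => ⟨by have := hy.1; positivity, h7 y (Ioo_subset_Ico_self hy)⟩)
    (fun y _ => by
      nlinarith [pow_nonneg (sq_nonneg y) 4, pow_nonneg (sq_nonneg y) 5,
        pow_nonneg (sq_nonneg y) 6, pow_nonneg (sq_nonneg y) 7])

/-- `x * tan x * (tan x - x) * g' x = gDerivNumerator x (tan x)`. -/
def gDerivNumerator (x t : ℝ) : ℝ :=
  x * t ^ 3 - 3 * x * t - 6 * x ^ 2 - 6 * x ^ 2 * t ^ 2 + 9 * t ^ 2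

theorem gDerivNumerator_tanTaylor_pos {x : ℝ} (hx : 0 < x) :
    0 < gDerivNumerator x (tanTaylor x) := by
  have expand : gDerivNumerator x (tanTaylor x)
      = x ^ 8 * (8/105 + 152/1575*x^2 - 10/189*x^4 + 2734/99225*x^6 + 28373/1488375*x^8
          + 39497/4465125*x^10 + 8726/2679075*x^12 + 88873/56260575*x^14 + 21514/56260575*x^16
          + 65348/843908625*x^18 + 238328/22785532875*x^20) := by
    rw [gDerivNumerator, tanTaylor]; ring
  rw [expand]
  refine mul_pos (by positivity) ?_
  nlinarith [sq_nonneg (x / 4 - 20 / 189 * x ^ 3), pow_nonneg (sq_nonneg x) 3,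
    pow_nonneg (sq_nonneg x) 4, pow_nonneg (sq_nonneg x) 5, pow_nonneg (sq_nonneg x) 6,
    pow_nonneg (sq_nonneg x) 7, pow_nonneg (sq_nonneg x) 8, pow_nonneg (sq_nonneg x) 9,
    pow_nonneg (sq_nonneg x) 10]

theorem gDerivNumerator_pos_of_tanTaylor_le {x t : ℝ} (hx : 0 < x) (ht : tanTaylor x ≤ t) :
    0 < gDerivNumerator x t := by
  set T := tanTaylor x with hT
  have taylor : gDerivNumerator x t = gDerivNumerator x T
      + (t - T) * (3 * x * T ^ 2 + (18 - 12 * x ^ 2) * T - 3 * x)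
      + (t - T) ^ 2 * (3 * x * T + 9 - 6 * x ^ 2) + x * (t - T) ^ 3 := by
    rw [gDerivNumerator, gDerivNumerator]; ring
  have hd1 : 0 ≤ 3 * x * T ^ 2 + (18 - 12 * x ^ 2) * T - 3 * x := by
    have expand : 3 * x * T ^ 2 + (18 - 12 * x ^ 2) * T - 3 * x
        = x * (15 - 3*x^2 + 2/5*x^4 + 53/105*x^6 + 106/315*x^8 + 142/4725*x^10 + 176/2025*x^12
          + 2603/99225*x^14 + 2108/297675*x^16 + 3844/2679075*x^18) := by
      rw [hT, tanTaylor]; ring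
    rw [expand]
    refine mul_nonneg hx.le ?_
    nlinarith [sq_nonneg (x ^ 2 - 15 / 4), pow_nonneg (sq_nonneg x) 3, pow_nonneg (sq_nonneg x) 4,
      pow_nonneg (sq_nonneg x) 5, pow_nonneg (sq_nonneg x) 6, pow_nonneg (sq_nonneg x) 7,
      pow_nonneg (sq_nonneg x) 8, pow_nonneg (sq_nonneg x) 9]
  have hd2 : 0 ≤ 3 * x * T + 9 - 6 * x ^ 2 := by
    have expand : 3 * x * T + 9 - 6 * x ^ 2
        = (x ^ 2 - 3 / 2) ^ 2 + 27 / 4 + 2/5*x^6 + 17/105*x^8 + 62/945*x^10 := by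
      rw [hT, tanTaylor]; ring
    rw [expand]
    positivity
  have hdt := sub_nonneg.2 ht
  rw [taylor]
  linarith [gDerivNumerator_tanTaylor_pos hx, mul_nonneg hdt hd1,
    mul_nonneg (sq_nonneg (t - T)) hd2, mul_nonneg hx.le (pow_nonneg hdt 3)]

noncomputable def g (x : ℝ) : ℝ := 6 * log (tan x / x) - 5 * log (3 * (tan x - x) / x ^ 3)

theorem hasDerivAt_g {x : ℝ} (hx : x ∈ Ioo 0 (π / 2)) :
    HasDerivAt g (gDerivNumerator x (tan x) / (x * tan x * (tan x - x))) x := by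
  obtain ⟨hx0, hx1⟩ := hx
  have hc : cos x ≠ 0 := (cos_pos_of_mem_Ico_zero ⟨hx0.le, hx1⟩).ne'
  have ht : 0 < tan x := tan_pos_of_pos_of_lt_pi_div_two hx0 hx1
  have htx : 0 < tan x - x := sub_pos.2 (lt_tan hx0 hx1)
  have htan := hasDerivAt_tan_one_add_sq hc
  have h1 := (htan.fun_div (hasDerivAt_id' x) hx0.ne').log (by positivity)
  have h2 := (((htan.fun_sub (hasDerivAt_id' x)).const_mul 3).fun_div (hasDerivAt_pow 3 x)
    (by positivity)).log (by positivity)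
  refine ((h1.const_mul 6).sub (h2.const_mul 5)).congr_deriv ?_
  field_simp
  rw [gDerivNumerator]
  ring

theorem strictMonoOn_g : StrictMonoOn g (Ioo 0 (π / 2)) := by
  refine strictMonoOn_of_hasDerivWithinAt_pos (convex_Ioo _ _)
    (fun x hx => (hasDerivAt_g hx).continuousAt.continuousWithinAt)
    (fun x hx => (hasDerivAt_g (interior_subset hx)).hasDerivWithinAt) fun x hx => ?_
  rw [interior_Ioo] at hx
  obtain ⟨hx0, hx1⟩ := hx
  have ht : 0 < tan x := tan_pos_of_pos_of_lt_pi_div_two hx0 hx1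
  have htx : 0 < tan x - x := sub_pos.2 (lt_tan hx0 hx1)
  exact div_pos (gDerivNumerator_pos_of_tanTaylor_le hx0 (tanTaylor_le_tan x ⟨hx0.le, hx1⟩))
    (by positivity)

theorem tendsto_tan_div_self : Tendsto (fun x => tan x / x) (𝓝[≠] 0) (𝓝 1) := by
  have h := (hasDerivAt_tan_one_add_sq (by simp : cos 0 ≠ 0)).tendsto_slope
  simp only [tan_zero, slope_fun_def_field, sub_zero] at h
  simpa using h

theorem tendsto_tan_sub_self_div_pow_three :
    Tendsto (fun x => (tan x - x) / x ^ 3) (𝓝[≠] 0) (𝓝 (1 / 3)) := by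
  have hcos : ∀ᶠ x in 𝓝[≠] (0 : ℝ), cos x ≠ 0 :=
    nhdsWithin_le_nhds (continuous_cos.continuousAt.eventually_ne (by simp))
  refine HasDerivAt.lhopital_zero_nhdsNE (f' := fun x => tan x ^ 2) (g' := fun x => 3 * x ^ 2)
    (hcos.mono fun x hx => ((hasDerivAt_tan_one_add_sq hx).sub (hasDerivAt_id' x)).congr_deriv
      (by ring))
    (Eventually.of_forall fun x => (hasDerivAt_pow 3 x).congr_deriv (by norm_num))
    (eventually_nhdsWithin_of_forall fun x hx => by simpa using hx) ?_ ?_ ?_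
  · simpa using ((continuousAt_tan.2 (by simp)).fun_sub (continuousAt_id' 0)).tendsto.mono_left
      nhdsWithin_le_nhds
  · simpa using ((continuous_pow 3).tendsto (0 : ℝ)).mono_left nhdsWithin_le_nhds
  · have h := (tendsto_tan_div_self.pow 2).div_const 3
    norm_num at h
    refine h.congr' (eventually_nhdsWithin_of_forall fun x hx => ?_)
    field_simp

theorem tendsto_g_zero : Tendsto g (𝓝[≠] 0) (𝓝 0) := by
  have hlog : Tendsto log (𝓝 1) (𝓝 0) := by
    simpa using (continuousAt_log one_ne_zero).tendsto
  have h1 := hlog.comp tendsto_tan_div_self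
  have h2 := hlog.comp (by simpa using tendsto_tan_sub_self_div_pow_three.const_mul 3 :
    Tendsto (fun x => 3 * ((tan x - x) / x ^ 3)) (𝓝[≠] 0) (𝓝 1))
  unfold g
  simp only [mul_div_assoc]
  simpa [Function.comp_def] using (h1.const_mul 6).sub (h2.const_mul 5)

theorem StrictMonoOn.lt_of_tendsto_nhdsGT {α β : Type*} [LinearOrder α] [TopologicalSpace α]
    [OrderTopology α] [DenselyOrdered α] [LinearOrder β] [TopologicalSpace β]
    [OrderClosedTopology β] {f : α → β} {a b x : α} {c : β} (hf : StrictMonoOn f (Ioo a b))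
    (hc : Tendsto f (𝓝[>] a) (𝓝 c)) (hx : x ∈ Ioo a b) : c < f x := by
  obtain ⟨y, hay, hyx⟩ := exists_between hx.1
  have hy : y ∈ Ioo a b := ⟨hay, hyx.trans hx.2⟩
  have := nhdsGT_neBot_of_exists_gt ⟨y, hay⟩
  have hcy : c ≤ f y := le_of_tendsto hc <| mem_of_superset (Ioo_mem_nhdsGT hay) fun z hz =>
    (hf ⟨hz.1, hz.2.trans hy.2⟩ hy hz.2).le
  exact hcy.trans_lt (hf hy hx hyx)

theorem g_pos (x : ℝ) (hx : 0 < x) (hx2 : x < Real.pi / 2) :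
    0 < 6 * Real.log (Real.tan x / x) - 5 * Real.log (3 * (Real.tan x - x) / x ^ 3) :=
  strictMonoOn_g.lt_of_tendsto_nhdsGT (tendsto_g_zero.mono_left (nhdsGT_le_nhdsNE 0)) ⟨hx, hx2⟩
end
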